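/- Consider the graph on ℝ where x and y are adjacent iff |x - y| = √2 + q for some rational q. The connected component of 0 is {n√2 + q : n ∈ ℤ, q ∈ ℚ}, and coloring n√2 + q by the parity of n is a proper 2-coloring of this component. -/

import Mathlib

noncomputable def shelahSoifer : SimpleGraph ℝ :=
  SimpleGraph.fromRel (fun x y => ∃ q : ℚ, |x - y| = Real.sqrt 2 + q)

/-! Every edge changes the `√2`-coordinate of `n √2 + q` by exactly `±1`, and this
coordinate is well defined because `√2` is irrational. Hence the component of `0` stays
inside `ℤ √2 + ℚ` and the parity of the coordinate alternates along edges. Conversely,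
every point of `ℤ √2 + ℚ` is reached by steps of length `√2` together with detours
`x → x + √2 + r → x + q`. -/

theorem Irrational.intCast_eq_of_mul_add_ratCast_eq {α : ℝ} (hα : Irrational α) {n m : ℤ}
    {q p : ℚ} (h : n * α + q = m * α + p) : n = m := by
  by_contra hnm
  have hα' : ((n - m : ℤ) : ℝ) * α = (p - q : ℚ) := by push_cast; linarith
  exact (hα.intCast_mul (sub_ne_zero.mpr hnm)).ne_rat _ hα'

namespace shelahSoifer

open Real SimpleGraph

theorem adj_iff {x y : ℝ} : shelahSoifer.Adj x y ↔ ∃ q : ℚ, |x - y| = √2 + q := by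
  refine ⟨fun ⟨_, h⟩ => h.elim id fun ⟨q, hq⟩ => ⟨q, by rwa [abs_sub_comm]⟩,
    fun ⟨q, hq⟩ => ⟨?_, .inl ⟨q, hq⟩⟩⟩
  rintro rfl
  exact (irrational_sqrt_two.add_ratCast q).ne_zero (by simpa using hq.symm)

theorem exists_sub_eq_of_adj {x y : ℝ} (h : shelahSoifer.Adj x y) :
    ∃ ε : ℤ, (ε = 1 ∨ ε = -1) ∧ ∃ r : ℚ, x - y = ε * √2 + r := by
  obtain ⟨r, hr⟩ := adj_iff.mp h
  rcases eq_or_eq_neg_of_abs_eq hr with hxy | hxy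
  · exact ⟨1, .inl rfl, r, by simp [hxy]⟩
  · exact ⟨-1, .inr rfl, -r, by push_cast; linarith⟩

theorem adj_add_sqrt_two_add (x : ℝ) {r : ℚ} (hr : 0 < √2 + r) :
    shelahSoifer.Adj x (x + (√2 + r)) :=
  adj_iff.mpr ⟨r, by rw [sub_add_cancel_left, abs_neg, abs_of_pos hr]⟩

theorem reachable_add_intCast_mul_sqrt_two (x : ℝ) (n : ℤ) :
    shelahSoifer.Reachable x (x + n * √2) := by
  have step (y : ℝ) : shelahSoifer.Adj y (y + √2) := by
    simpa using adj_add_sqrt_two_add y (r := 0) (by positivity)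
  induction n using Int.induction_on with
  | zero => simp
  | succ k ih =>
    refine ih.trans ?_
    convert (step _).reachable using 1
    push_cast
    ring
  | pred k ih =>
    refine ih.trans ?_
    convert (step (x + ((-k - 1 : ℤ) : ℝ) * √2)).reachable.symm using 1
    push_cast
    ring

theorem reachable_add_ratCast (x : ℝ) (q : ℚ) : shelahSoifer.Reachable x (x + q) := by
  have hq := le_abs_self (q : ℝ)
  have hsqrt : 0 < √2 := by positivity
  have h₁ := adj_add_sqrt_two_add x (r := |q|) (by push_cast; positivity)
  have h₂ := adj_add_sqrt_two_add (x + q) (r := |q| - q) (by push_cast; linarith)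
  rw [show x + q + (√2 + ((|q| - q : ℚ) : ℝ)) = x + (√2 + |q|) by push_cast; ring] at h₂
  exact h₁.reachable.trans h₂.reachable.symm

theorem intCast_sub_eq_one_or_neg_one_of_adj {n m : ℤ} {q p : ℚ}
    (h : shelahSoifer.Adj (n * √2 + q) (m * √2 + p)) : n - m = 1 ∨ n - m = -1 := by
  obtain ⟨ε, hε, r, hr⟩ := exists_sub_eq_of_adj h
  have : ((n - m : ℤ) : ℝ) * √2 + (q - p : ℚ) = ε * √2 + r := by push_cast; linarith
  rwa [irrational_sqrt_two.intCast_eq_of_mul_add_ratCast_eq this]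

theorem reachable_zero_iff (x : ℝ) :
    shelahSoifer.Reachable 0 x ↔ ∃ n : ℤ, ∃ q : ℚ, x = n * √2 + q := by
  constructor
  · rw [reachable_iff_reflTransGen]
    intro h
    induction h with
    | refl => exact ⟨0, 0, by simp⟩
    | tail _ hyz ih =>
      obtain ⟨n, q, rfl⟩ := ih
      obtain ⟨ε, -, r, hr⟩ := exists_sub_eq_of_adj hyz
      exact ⟨n - ε, q - r, by push_cast; linarith⟩
  · rintro ⟨n, q, rfl⟩
    simpa using (reachable_add_intCast_mul_sqrt_two 0 n).trans (reachable_add_ratCast _ q)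

end shelahSoifer

theorem shelah_soifer_component_and_coloring :
    (∀ x : ℝ, shelahSoifer.Reachable 0 x ↔
      ∃ n : ℤ, ∃ q : ℚ, x = n * Real.sqrt 2 + q) ∧
    (∀ n m : ℤ, ∀ q p : ℚ,
      shelahSoifer.Adj (n * Real.sqrt 2 + q) (m * Real.sqrt 2 + p) → n % 2 ≠ m % 2) := by
  refine ⟨shelahSoifer.reachable_zero_iff, fun n m q p h => ?_⟩
  have := shelahSoifer.intCast_sub_eq_one_or_neg_one_of_adj h
  omega
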